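/- arXiv:math/0005240 — 2 statements merged into one kernel-verified Lean document; each statement's English description precedes it below -/
import Mathlib

section
/- For every natural number k ≥ 1, (1/π) · ∫_{-π}^{π} (sin t · sin(kt)) / (2(1 − cos t)) dt = 1. -/
open Real

lemma key_identity (k : ℕ) (t : ℝ) :
    Real.sin t * Real.sin (k * t) =
      (1 - Real.cos t) * ((∑ j ∈ Finset.range (k + 1), Real.cos (j * t)) +
        (∑ j ∈ Finset.range k, Real.cos (j * t)) - 1) := by
  induction k with
  | zero => simp
  | succ k ih =>
    rw [Finset.sum_range_succ, Finset.sum_range_succ]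
    push_cast
    have h : ((k : ℝ) + 1) * t = (k : ℝ) * t + t := by ring
    rw [h, Real.sin_add, Real.cos_add]
    push_cast at ih
    have hs : (∑ j ∈ Finset.range (k + 1), Real.cos ((j : ℝ) * t))
        = (∑ j ∈ Finset.range k, Real.cos ((j : ℝ) * t)) + Real.cos ((k : ℝ) * t) := by
      rw [Finset.sum_range_succ]
    linear_combination ih + Real.cos ((k : ℝ) * t) * Real.sin_sq_add_cos_sq t
      + (1 - Real.cos t) * hs

lemma int_cos_nat (j : ℕ) (hj : j ≠ 0) :
    ∫ t in (-π)..π, Real.cos (j * t) = 0 := by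
  have hj' : (j : ℝ) ≠ 0 := by exact_mod_cast hj
  rw [intervalIntegral.integral_comp_mul_left (fun x => Real.cos x) hj', integral_cos,
    mul_neg, Real.sin_neg, Real.sin_nat_mul_pi]
  simp

set_option maxHeartbeats 1000000 in
theorem stmt_1 (k : ℕ) (hk : 1 ≤ k) :
    (1 / π) * ∫ t in (-π)..π, (Real.sin t * Real.sin (k * t)) / (2 * (1 - Real.cos t)) = 1 := by
  have hπ := Real.pi_pos
  have hcongr : ∫ t in (-π)..π, (Real.sin t * Real.sin (k * t)) / (2 * (1 - Real.cos t))
      = ∫ t in (-π)..π, (1/2) * ((∑ j ∈ Finset.range (k + 1), Real.cos (j * t)) +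
        (∑ j ∈ Finset.range k, Real.cos (j * t)) - 1) := by
    apply intervalIntegral.integral_congr_ae
    have h0 : ∀ᵐ x : ℝ, x ≠ 0 := by
      rw [MeasureTheory.ae_iff]
      simpa using MeasureTheory.measure_singleton (0 : ℝ)
    filter_upwards [h0] with x hx hmem
    have hxle : |x| ≤ π := by
      rw [Set.uIoc_of_le (by linarith)] at hmem
      rw [abs_le]
      exact ⟨le_of_lt hmem.1, hmem.2⟩
    have hc : Real.cos x ≠ 1 := by
      intro h
      rcases (Real.cos_eq_one_iff x).1 h with ⟨n, hn⟩
      rcases eq_or_ne n 0 with rfl | hn0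
      · simp at hn; exact hx hn.symm
      · have h1 : (1 : ℝ) ≤ |(n : ℝ)| := by exact_mod_cast Int.one_le_abs hn0
        have h2 : |x| = |(n : ℝ)| * |2 * π| := by rw [← hn, abs_mul]
        have h3 : |2 * π| = 2 * π := abs_of_pos (by positivity)
        nlinarith
    have hne : (1 : ℝ) - Real.cos x ≠ 0 := sub_ne_zero.mpr (Ne.symm hc)
    rw [key_identity k x]
    generalize ((∑ j ∈ Finset.range (k + 1), Real.cos (j * x)) +
        (∑ j ∈ Finset.range k, Real.cos (j * x)) - 1) = E
    field_simp
  rw [hcongr]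
  have hInt : ∀ j : ℕ, IntervalIntegrable (fun t => Real.cos (j * t)) MeasureTheory.volume (-π) π := by
    intro j
    exact (Real.continuous_cos.comp (continuous_const.mul continuous_id)).intervalIntegrable _ _
  have hIntS : ∀ n : ℕ, IntervalIntegrable (fun t => ∑ j ∈ Finset.range n, Real.cos (j * t))
      MeasureTheory.volume (-π) π :=
    fun n => (continuous_finset_sum (Finset.range n)
      (fun j _ => Real.continuous_cos.comp (continuous_const.mul continuous_id))).intervalIntegrable _ _
  have hsum : ∀ n : ℕ, 1 ≤ n → ∫ t in (-π)..π, (∑ j ∈ Finset.range n, Real.cos (j * t)) = 2 * π := by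
    intro n hn
    rw [intervalIntegral.integral_finset_sum (fun j _ => hInt j)]
    rw [Finset.sum_eq_single 0]
    · simp; ring
    · intro j _ hj; exact int_cos_nat j hj
    · intro h; exact absurd (Finset.mem_range.mpr hn) h
  rw [intervalIntegral.integral_const_mul,
    intervalIntegral.integral_sub ((hIntS (k + 1)).add (hIntS k)) intervalIntegrable_const,
    intervalIntegral.integral_add (hIntS (k + 1)) (hIntS k),
    hsum (k + 1) (by omega), hsum k hk]
  rw [intervalIntegral.integral_const]
  simp only [smul_eq_mul, mul_one]
  field_simp
  ring
end

section
/- For every natural number n ≥ 1 and every real α with 0 < α < π/2, ∫_{α}^{π−α} sin((2n−1)θ) / (sin θ)^{2n+1} dθ = sin(2nα) / (n·(sin α)^{2n}). -/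
open Real

/-!
The integrand is an exact derivative:
`d/dθ (-sin (2nθ) / sin θ ^ 2n) = 2n sin ((2n-1)θ) / sin θ ^ (2n+1)`, because the numerator of the quotient rule is `sin (2nθ) cos θ - cos (2nθ) sin θ = sin ((2n-1)θ)`.
At the endpoints `sin (π - α) = sin α` and `sin (2n(π - α)) = -sin (2nα)`, so the two boundary
terms add up.
-/

theorem hasDerivAt_neg_sin_mul_div_sin_pow (n : ℕ) {θ : ℝ} (hθ : sin θ ≠ 0) :
    HasDerivAt (fun x => -sin (2 * n * x) / sin x ^ (2 * n))
      (2 * n * (sin ((2 * n - 1) * θ) / sin θ ^ (2 * n + 1))) θ := by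
  have hnum : HasDerivAt (fun x => -sin (2 * n * x)) (-(cos (2 * n * θ) * (2 * n))) θ :=
    ((hasDerivAt_sin _).comp θ ((hasDerivAt_id θ).const_mul (2 * (n : ℝ)))).neg.congr_deriv
      (by simp only [id]; ring)
  have hden : HasDerivAt (fun x => sin x ^ (2 * n))
      (((2 * n : ℕ) : ℝ) * sin θ ^ (2 * n - 1) * cos θ) θ :=
    (hasDerivAt_sin θ).pow _
  refine (hnum.div hden (pow_ne_zero _ hθ)).congr_deriv ?_
  -- the exponent `2 * n - 1` from `HasDerivAt.pow` is truncated subtraction in `ℕ`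
  obtain _ | m := n
  · simp
  · have hsub : (2 * ((m + 1 : ℕ) : ℝ) - 1) * θ = 2 * (m + 1 : ℕ) * θ - θ := by ring
    rw [hsub, sin_sub, show 2 * (m + 1) - 1 = 2 * m + 1 by omega, pow_succ _ (2 * (m + 1))]
    rw [show 2 * (m + 1) = (2 * m + 1) + 1 by omega, pow_succ _ (2 * m + 1)]
    field_simp
    push_cast
    ring

theorem integral_sin_mul_div_sin_pow (n : ℕ) (hn : n ≠ 0) {a b : ℝ}
    (hsin : ∀ x ∈ Set.uIcc a b, sin x ≠ 0) :
    ∫ θ in a..b, sin ((2 * n - 1) * θ) / sin θ ^ (2 * n + 1)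
      = (sin (2 * n * a) / sin a ^ (2 * n) - sin (2 * n * b) / sin b ^ (2 * n)) / (2 * n) := by
  have hcont : ContinuousOn (fun θ => sin ((2 * n - 1) * θ) / sin θ ^ (2 * n + 1))
      (Set.uIcc a b) :=
    (by fun_prop : Continuous fun θ => sin ((2 * n - 1) * θ)).continuousOn.div
      (by fun_prop : Continuous fun θ => sin θ ^ (2 * n + 1)).continuousOn
      fun x hx => pow_ne_zero _ (hsin x hx)
  have hFTC := intervalIntegral.integral_eq_sub_of_hasDerivAt
    (fun x hx => hasDerivAt_neg_sin_mul_div_sin_pow n (hsin x hx))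
    (hcont.intervalIntegrable.const_mul (2 * (n : ℝ)))
  rw [intervalIntegral.integral_const_mul] at hFTC
  have hn' : (2 * n : ℝ) ≠ 0 := by positivity
  rw [eq_div_iff hn', mul_comm, hFTC]
  ring

theorem stmt_19 (n : ℕ) (hn : 1 ≤ n) (α : ℝ) (h0 : 0 < α) (h1 : α < π / 2) :
    ∫ θ in α..(π - α), Real.sin ((2 * (n : ℝ) - 1) * θ) / (Real.sin θ) ^ (2 * n + 1)
      = Real.sin (2 * n * α) / (n * (Real.sin α) ^ (2 * n)) := by
  have hsin : ∀ x ∈ Set.uIcc α (π - α), sin x ≠ 0 := by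
    intro x hx
    rw [Set.uIcc_of_le (by linarith)] at hx
    exact (sin_pos_of_pos_of_lt_pi (by linarith [hx.1]) (by linarith [hx.2])).ne'
  have hreflect : sin (2 * n * (π - α)) = -sin (2 * n * α) := by
    rw [← sin_nat_mul_two_pi_sub]
    ring_nf
  rw [integral_sin_mul_div_sin_pow n (by omega) hsin, hreflect, sin_pi_sub]
  have hn' : (n : ℝ) ≠ 0 := by positivity
  have hsα : sin α ≠ 0 := hsin α Set.left_mem_uIcc
  field_simp
  ring
end
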